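/- Identity for weighted sums (Lemma SX): let X have law p, independent of i.i.d. (X_i) with law p^A, S_n = Σ_{i=1}^n X_i, and set n_j = n − 1_{A}(j). Then for all ℓ ∈ ℤ and n ≥ 2: E[(n/n_X)·X·1_{X + S_{n_X} = n_X + ℓ}] = ℓ·E[(n/n_X)·1_{X + S_{n_X} = n_X + ℓ}] − (ℓ−1)·P(S_n = n+ℓ−1). -/

import Mathlib

open scoped Classical ENNReal

/-- Law of the sum of `n` i.i.d. copies drawn from `q`. -/
noncomputable def sumIid (q : PMF ℕ) : ℕ → PMF ℕ
  | 0 => PMF.pure 0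
  | n + 1 => q.bind fun a => (sumIid q n).map fun b => a + b

/-- Law of `X_A = Σ_{k=1}^{N-1} Y'_k + Y''`. -/
noncomputable def pXA (pN pY' pY'' : PMF ℕ) : PMF ℕ :=
  pN.bind fun n => (sumIid pY' (n - 1)).bind fun s => pY''.map fun y => s + y

/-- `walk p n m = P(S_n = m)` for the random walk with i.i.d. steps of law `p`. -/
noncomputable def walk (p : ℕ → ℝ) : ℕ → ℕ → ℝ
  | 0, m => if m = 0 then 1 else 0
  | n + 1, m => ∑ j ∈ Finset.range (m + 1), p j * walk p n (m - j)

/-- `walkZ p n m`, allowing an integer target (zero for negative targets). -/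
noncomputable def walkZ (p : ℕ → ℝ) (n : ℕ) (m : ℤ) : ℝ :=
  if 0 ≤ m then walk p n m.toNat else 0

/-- Version allowing an integer number of steps. -/
noncomputable def walkZZ (p : ℕ → ℝ) (n m : ℤ) : ℝ :=
  if 0 ≤ n then walkZ p n.toNat m else 0

/-!
Write `Q`, `P_A`, `P_B` for the generating functions of `p^A` and of `p` restricted to `A` and to
`Aᶜ`. By memorylessness of the geometric `N`, `X_A` is `Y''` with probability `p(A)` and
`Y' + X_A'` otherwise, which is the fixed-point equation `X Q = X P_A + P_B Q`; and
`P(S_n = m)` is the `m`-th coefficient of `Q ^ n`. The Euler operator `θ = X d/dX` multiplies the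
`m`-th coefficient by `m` and is a derivation, so `θ (Q ^ n) = n Q ^ (n - 1) θ Q` is the size-bias
identity `m P(S_n = m) = n E[X_1; S_n = m]`. Both sides of the claim are coefficients of products
of these series, and the identity follows by applying `θ` to the fixed-point equation multiplied
by powers of `Q` and comparing coefficients.
-/

open PowerSeries Finset.HasAntidiagonal

section EulerOperator

variable {R : Type*} [CommSemiring R]

lemma coeff_X_mul_derivative (f : R⟦X⟧) (n : ℕ) :
    coeff n (X * d⁄dX R f) = n * coeff n f := by
  cases n with
  | zero => simp
  | succ n => rw [coeff_succ_X_mul, coeff_derivative, mul_comm]; push_cast; rfl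

lemma X_mul_derivative_mk (a : ℕ → R) : X * d⁄dX R (mk a) = mk fun n => n * a n := by
  ext n
  rw [coeff_X_mul_derivative, coeff_mk, coeff_mk]

lemma X_mul_derivative_mul_pow_succ (f g : R⟦X⟧) (j : ℕ) :
    X * d⁄dX R (f * g ^ (j + 1))
      = X * d⁄dX R f * g ^ (j + 1) + (j + 1 : R) • (f * g ^ j * (X * d⁄dX R g)) := by
  rw [Derivation.leibniz, derivative_pow, smul_eq_mul, smul_eq_mul, smul_eq_C_mul, map_add,
    map_one, map_natCast, add_tsub_cancel_right]
  push_cast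
  ring

end EulerOperator

lemma walk_eq_coeff (q : ℕ → ℝ) (n m : ℕ) : walk q n m = coeff m (mk q ^ n) := by
  induction n generalizing m with
  | zero => simp [walk, coeff_one]
  | succ n ih =>
    rw [pow_succ', coeff_mul, Finset.Nat.sum_antidiagonal_eq_sum_range_succ_mk]
    simp only [walk, ih, coeff_mk]

lemma walkZ_natCast_eq_coeff (q : ℕ → ℝ) (n m : ℕ) : walkZ q n m = coeff m (mk q ^ n) := by
  simp [walkZ, walk_eq_coeff]

lemma walkZ_of_neg (q : ℕ → ℝ) (n : ℕ) {m : ℤ} (hm : m < 0) : walkZ q n m = 0 := by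
  simp [walkZ, hm.not_ge]

lemma hasSum_mul_walkZ (a q : ℕ → ℝ) (n m : ℕ) :
    HasSum (fun j : ℕ => a j * walkZ q n (m - j)) (coeff m (mk a * mk q ^ n)) := by
  have hsum : coeff m (mk a * mk q ^ n)
      = ∑ j ∈ Finset.range (m + 1), a j * walkZ q n (m - j) := by
    rw [coeff_mul, Finset.Nat.sum_antidiagonal_eq_sum_range_succ_mk]
    refine Finset.sum_congr rfl fun j hj => ?_
    rw [coeff_mk, ← walkZ_natCast_eq_coeff, Nat.cast_sub (by simpa [Nat.lt_succ_iff] using hj)]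
  rw [hsum]
  exact hasSum_sum_of_ne_finset_zero fun j hj => by
    rw [walkZ_of_neg _ _ (by simp at hj; omega), mul_zero]

-- The theorem in generating-function form, for `n = k + 2` and `ℓ = m + 1 - n`.
lemma coeff_identity_of_tree_eq {K : Type*} [Field K] [CharZero K] {Q PA PB : K⟦X⟧}
    (hQ : X * Q = X * PA + PB * Q) (k m : ℕ) :
    (k + 2) / (k + 1) * coeff m (X * d⁄dX K PA * Q ^ (k + 1))
        + coeff (m + 1) (X * d⁄dX K PB * Q ^ (k + 2))
      = ((m : K) - k - 1) * ((k + 2) / (k + 1) * coeff m (PA * Q ^ (k + 1))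
          + coeff (m + 1) (PB * Q ^ (k + 2)))
        - ((m : K) - k - 2) * coeff m (Q ^ (k + 2)) := by
  have htree (F : K⟦X⟧) :
      coeff m (Q * F) = coeff m (PA * F) + coeff (m + 1) (PB * Q * F) := by
    rw [← coeff_succ_X_mul, ← coeff_succ_X_mul (φ := PA * F), ← map_add, ← mul_assoc, hQ]
    ring_nf
  have htree_pow : coeff m (Q ^ (k + 2))
      = coeff m (PA * Q ^ (k + 1)) + coeff (m + 1) (PB * Q ^ (k + 2)) := by
    rw [pow_succ' Q (k + 1), htree, mul_assoc PB, ← pow_succ']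
  have htree_euler : coeff m (Q ^ (k + 1) * (X * d⁄dX K Q))
      = coeff m (PA * Q ^ k * (X * d⁄dX K Q))
        + coeff (m + 1) (PB * Q ^ (k + 1) * (X * d⁄dX K Q)) := by
    rw [pow_succ', mul_assoc, htree]
    ring_nf
  have hsize := congrArg (coeff m) (X_mul_derivative_mul_pow_succ 1 Q (k + 1))
  have heulerA := congrArg (coeff m) (X_mul_derivative_mul_pow_succ PA Q k)
  have heulerB := congrArg (coeff (m + 1)) (X_mul_derivative_mul_pow_succ PB Q (k + 1))
  simp only [coeff_X_mul_derivative, map_add, coeff_smul, smul_eq_mul, derivative_one, mul_zero,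
    zero_mul, one_mul, zero_add] at hsize heulerA heulerB
  push_cast at hsize heulerA heulerB
  have hk : (k + 1 : K) ≠ 0 := Nat.cast_add_one_ne_zero k
  field_simp
  linear_combination (k + 1) * hsize - (k + 2) * heulerA - (k + 1) * heulerB
    + (k + 1) * (k + 2) * (htree_euler - htree_pow)

lemma PMF.map_add_left_apply (P : PMF ℕ) (c m : ℕ) :
    P.map (c + ·) m = if c ≤ m then P (m - c) else 0 := by
  rw [PMF.map_apply]
  split_ifs with h
  · rw [tsum_eq_single (m - c) fun y hy => ?_, if_pos (by omega)]
    exact if_neg (by omega)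
  · exact ENNReal.tsum_eq_zero.mpr fun y => if_neg (by omega)

lemma PMF.bind_map_add_apply (P Q : PMF ℕ) (m : ℕ) :
    (P.bind fun a => Q.map (a + ·)) m = ∑ x ∈ antidiagonal m, P x.1 * Q x.2 := by
  rw [PMF.bind_apply, Finset.Nat.sum_antidiagonal_eq_sum_range_succ_mk,
    tsum_eq_sum (s := Finset.range (m + 1)) fun a ha => by
      rw [PMF.map_add_left_apply, if_neg (by simpa using ha), mul_zero]]
  refine Finset.sum_congr rfl fun a ha => ?_
  rw [PMF.map_add_left_apply, if_pos (by simpa [Nat.lt_succ_iff] using ha)]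

noncomputable def sumIidAdd (q r : PMF ℕ) (n : ℕ) : PMF ℕ :=
  (sumIid q n).bind fun s => r.map (s + ·)

lemma sumIidAdd_zero (q r : PMF ℕ) : sumIidAdd q r 0 = r := by
  rw [sumIidAdd, sumIid, PMF.pure_bind]
  simp only [zero_add]
  exact r.map_id

lemma sumIidAdd_succ (q r : PMF ℕ) (n : ℕ) :
    sumIidAdd q r (n + 1) = q.bind fun a => (sumIidAdd q r n).map (a + ·) := by
  simp only [sumIidAdd, sumIid, PMF.bind_bind, PMF.bind_map, PMF.map_bind, PMF.map_comp]
  congr! 3 with a s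
  funext y
  simp [add_assoc]

lemma pXA_apply (pN pY' pY'' : PMF ℕ) (hN0 : pN 0 = 0) (m : ℕ) :
    pXA pN pY' pY'' m = ∑' n, pN (n + 1) * sumIidAdd pY' pY'' n m := by
  rw [pXA, PMF.bind_apply, tsum_eq_zero_add' ENNReal.summable, hN0, zero_mul, zero_add]
  rfl

lemma pXA_apply_of_geometric (pN pY' pY'' : PMF ℕ) {r : ℝ≥0∞} (hN0 : pN 0 = 0)
    (hr : ∀ n, pN (n + 2) = r * pN (n + 1)) (m : ℕ) :
    pXA pN pY' pY'' m
      = pN 1 * pY'' m + r * ∑ x ∈ antidiagonal m, pY' x.1 * pXA pN pY' pY'' x.2 := by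
  rw [pXA_apply _ _ _ hN0, tsum_eq_zero_add' ENNReal.summable, sumIidAdd_zero]
  congr 1
  calc ∑' n, pN (n + 1 + 1) * sumIidAdd pY' pY'' (n + 1) m
      = ∑' n, ∑ x ∈ antidiagonal m,
          r * (pY' x.1 * (pN (n + 1) * sumIidAdd pY' pY'' n x.2)) := by
        refine tsum_congr fun n => ?_
        rw [hr, sumIidAdd_succ, PMF.bind_map_add_apply, Finset.mul_sum]
        exact Finset.sum_congr rfl fun x _ => by ring
    _ = r * ∑ x ∈ antidiagonal m, pY' x.1 * pXA pN pY' pY'' x.2 := by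
        simp_rw [Summable.tsum_finsetSum (fun _ _ => ENNReal.summable), ENNReal.tsum_mul_left,
          Finset.mul_sum, pXA_apply _ _ _ hN0]

lemma tsum_indicator_compl_eq {α : Type*} {p : α → ℝ} (hps : Summable p) (A : Set α) :
    ∑' k, Aᶜ.indicator p k = ∑' k, p k - ∑' k, A.indicator p k := by
  rw [eq_sub_iff_add_eq, ← (hps.indicator _).tsum_add (hps.indicator _)]
  exact tsum_congr fun k => by rw [add_comm, Set.indicator_self_add_compl_apply]

section ATree

variable (p : ℕ → ℝ) (A : Set ℕ) (pN pY' pY'' : PMF ℕ)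

lemma pXA_apply_eq_ofReal (hp : ∀ k, 0 ≤ p k) (hpsum : ∑' k, p k = 1)
    (hApos : 0 < ∑' k : ℕ, A.indicator p k)
    (hN : ∀ n : ℕ, pN n = if 1 ≤ n then
        ENNReal.ofReal ((∑' k : ℕ, A.indicator p k)
          * (1 - ∑' k : ℕ, A.indicator p k) ^ (n - 1)) else 0)
    (hY'' : ∀ k : ℕ, pY'' k = if k ∈ A then
        ENNReal.ofReal (p k / ∑' j : ℕ, A.indicator p j) else 0)
    (hY' : ∀ k : ℕ, pY' k = if (k + 1) ∈ A then 0 else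
        ENNReal.ofReal (p (k + 1) / (1 - ∑' j : ℕ, A.indicator p j))) (m : ℕ) :
    pXA pN pY' pY'' m = ENNReal.ofReal (A.indicator p m)
      + ∑ x ∈ antidiagonal m,
          ENNReal.ofReal (Aᶜ.indicator p (x.1 + 1)) * pXA pN pY' pY'' x.2 := by
  set a := ∑' k : ℕ, A.indicator p k
  have hps : Summable p := by
    by_contra h
    rw [tsum_eq_zero_of_not_summable h] at hpsum
    exact zero_ne_one hpsum
  have hcompl : ∑' k, Aᶜ.indicator p k = 1 - a := hpsum ▸ tsum_indicator_compl_eq hps A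
  have hnonneg (k : ℕ) : 0 ≤ Aᶜ.indicator p k := Set.indicator_nonneg (fun k _ => hp k) k
  have hpAc (j : ℕ) (hj : j ∉ A) : p j ≤ 1 - a := by
    rw [← hcompl, ← Set.indicator_of_mem (Set.mem_compl hj) p]
    exact (hps.indicator _).le_tsum _ fun k _ => hnonneg k
  have ha1 : 0 ≤ 1 - a := hcompl ▸ tsum_nonneg hnonneg
  have hr (n : ℕ) : pN (n + 2) = ENNReal.ofReal (1 - a) * pN (n + 1) := by
    rw [hN, hN, if_pos (by omega), if_pos (by omega), ← ENNReal.ofReal_mul ha1,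
      show n + 2 - 1 = n + 1 from rfl, Nat.add_sub_cancel, pow_succ]
    ring_nf
  rw [pXA_apply_of_geometric pN pY' pY'' (by simp [hN]) hr, Finset.mul_sum]
  congr 1
  · rw [hN, hY'', if_pos le_rfl]
    by_cases hm : m ∈ A
    · rw [if_pos hm, Set.indicator_of_mem hm, Nat.sub_self, pow_zero, mul_one,
        ← ENNReal.ofReal_mul hApos.le, mul_div_cancel₀ _ hApos.ne']
    · rw [if_neg hm, Set.indicator_of_notMem hm, mul_zero, ENNReal.ofReal_zero]
  · refine Finset.sum_congr rfl fun x _ => ?_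
    rw [← mul_assoc, hY']
    by_cases hx : x.1 + 1 ∈ A
    · rw [if_pos hx, Set.indicator_of_notMem (by simpa using hx), mul_zero, ENNReal.ofReal_zero]
    · rw [if_neg hx, Set.indicator_of_mem (by simpa using hx), ← ENNReal.ofReal_mul ha1,
        mul_div_cancel_of_imp' fun h => le_antisymm (h ▸ hpAc _ hx) (hp _)]

lemma X_mul_mk_pXA_toReal (hp : ∀ k, 0 ≤ p k) (hpsum : ∑' k, p k = 1) (h0A : 0 ∈ A)
    (hApos : 0 < ∑' k : ℕ, A.indicator p k)
    (hN : ∀ n : ℕ, pN n = if 1 ≤ n then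
        ENNReal.ofReal ((∑' k : ℕ, A.indicator p k)
          * (1 - ∑' k : ℕ, A.indicator p k) ^ (n - 1)) else 0)
    (hY'' : ∀ k : ℕ, pY'' k = if k ∈ A then
        ENNReal.ofReal (p k / ∑' j : ℕ, A.indicator p j) else 0)
    (hY' : ∀ k : ℕ, pY' k = if (k + 1) ∈ A then 0 else
        ENNReal.ofReal (p (k + 1) / (1 - ∑' j : ℕ, A.indicator p j))) :
    X * mk (fun k => (pXA pN pY' pY'' k).toReal)
      = X * mk (A.indicator p)
        + mk (Aᶜ.indicator p) * mk fun k => (pXA pN pY' pY'' k).toReal := by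
  have hnonneg (B : Set ℕ) (k : ℕ) : 0 ≤ B.indicator p k :=
    Set.indicator_nonneg (fun k _ => hp k) k
  ext (_ | m)
  · simp [coeff_mul, h0A]
  · rw [map_add, coeff_succ_X_mul, coeff_succ_X_mul, coeff_mul, Finset.Nat.sum_antidiagonal_succ]
    simp only [coeff_mk, Set.indicator_of_notMem (Set.notMem_compl_iff.mpr h0A), zero_mul,
      zero_add]
    rw [pXA_apply_eq_ofReal p A pN pY' pY'' hp hpsum hApos hN hY'' hY' m,
      ENNReal.toReal_add ENNReal.ofReal_ne_top (ENNReal.sum_ne_top.mpr fun x _ =>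
        ENNReal.mul_ne_top ENNReal.ofReal_ne_top (PMF.apply_ne_top _ _)),
      ENNReal.toReal_sum fun x _ =>
        ENNReal.mul_ne_top ENNReal.ofReal_ne_top (PMF.apply_ne_top _ _),
      ENNReal.toReal_ofReal (hnonneg A m)]
    simp only [ENNReal.toReal_mul, ENNReal.toReal_ofReal (hnonneg Aᶜ _)]

end ATree

lemma hasSum_weighted_walkZ_split (p q w : ℕ → ℝ) (A : Set ℕ) {n m : ℕ} {ℓ : ℤ}
    (hn : 1 ≤ n) (hm : (n : ℤ) + ℓ - 1 = m) :
    HasSum (fun j : ℕ => p j * ((n : ℝ) / (n - if j ∈ A then 1 else 0)) * w j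
        * walkZ q (n - if j ∈ A then 1 else 0)
            (((n - if j ∈ A then 1 else 0 : ℕ) : ℤ) + ℓ - j))
      (n / (n - 1) * coeff m (mk (fun j => w j * A.indicator p j) * mk q ^ (n - 1))
        + coeff (m + 1) (mk (fun j => w j * Aᶜ.indicator p j) * mk q ^ n)) := by
  refine (((hasSum_mul_walkZ (fun j => w j * A.indicator p j) q (n - 1) m).mul_left
    ((n : ℝ) / (n - 1))).add (hasSum_mul_walkZ (fun j => w j * Aᶜ.indicator p j) q n (m + 1))
    ).congr_fun fun j => ?_
  by_cases hj : j ∈ A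
  · have : ((n - 1 : ℕ) : ℤ) + ℓ = m := by omega
    simp only [hj, if_true, Set.indicator_of_mem hj,
      Set.indicator_of_notMem (Set.notMem_compl_iff.mpr hj), this]
    ring
  · have : (n : ℤ) + ℓ = (m + 1 : ℕ) := by omega
    have hn0 : (n : ℝ) ≠ 0 := by positivity
    simp only [hj, if_false, Set.indicator_of_notMem hj, Set.indicator_of_mem (Set.mem_compl hj),
      Nat.sub_zero, sub_zero, div_self hn0, this]
    ring

theorem stmt16_general (p : ℕ → ℝ) (A : Set ℕ)
    (hp : ∀ k, 0 ≤ p k) (hpsum : ∑' k, p k = 1)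
    (h0A : 0 ∈ A) (hApos : 0 < ∑' k : ℕ, A.indicator p k)
    (pN pY' pY'' : PMF ℕ)
    (hN : ∀ n : ℕ, pN n = if 1 ≤ n then
        ENNReal.ofReal ((∑' k : ℕ, A.indicator p k)
          * (1 - ∑' k : ℕ, A.indicator p k) ^ (n - 1)) else 0)
    (hY'' : ∀ k : ℕ, pY'' k = if k ∈ A then
        ENNReal.ofReal (p k / ∑' j : ℕ, A.indicator p j) else 0)
    (hY' : ∀ k : ℕ, pY' k = if (k + 1) ∈ A then 0 else
        ENNReal.ofReal (p (k + 1) / (1 - ∑' j : ℕ, A.indicator p j))) :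
    -- `q = p^A` is the law of `X_A`, `S_n` the walk with steps of law `p^A`,
    -- and `n_j = n - 1_A(j)`.
    ∀ (ℓ : ℤ) (n : ℕ), 2 ≤ n →
      (∑' j : ℕ, p j
          * ((n : ℝ) / (n - if j ∈ A then 1 else 0)) * (j : ℝ)
          * walkZ (fun k => ((pXA pN pY' pY'') k).toReal)
              (n - if j ∈ A then 1 else 0)
              (((n - if j ∈ A then 1 else 0 : ℕ) : ℤ) + ℓ - j))
        = (ℓ : ℝ) * (∑' j : ℕ, p j
              * ((n : ℝ) / (n - if j ∈ A then 1 else 0))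
              * walkZ (fun k => ((pXA pN pY' pY'') k).toReal)
                  (n - if j ∈ A then 1 else 0)
                  (((n - if j ∈ A then 1 else 0 : ℕ) : ℤ) + ℓ - j))
          - ((ℓ : ℝ) - 1)
            * walkZ (fun k => ((pXA pN pY' pY'') k).toReal) n ((n : ℤ) + ℓ - 1) := by
  intro ℓ n hn
  set q : ℕ → ℝ := fun k => (pXA pN pY' pY'' k).toReal
  rcases lt_or_ge ((n : ℤ) + ℓ - 1) 0 with hneg | hnonneg
  · have hzero (j : ℕ) : walkZ q (n - if j ∈ A then 1 else 0)
        (((n - if j ∈ A then 1 else 0 : ℕ) : ℤ) + ℓ - j) = 0 := by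
      refine walkZ_of_neg _ _ ?_
      by_cases hj : j ∈ A
      · simp only [hj, if_true]; omega
      · have : j ≠ 0 := ne_of_mem_of_not_mem h0A hj |>.symm
        simp only [hj, if_false]; omega
    simp [hzero, walkZ_of_neg _ _ hneg]
  obtain ⟨m, hm⟩ : ∃ m : ℕ, (n : ℤ) + ℓ - 1 = m :=
    ⟨_, (Int.toNat_of_nonneg hnonneg).symm⟩
  obtain ⟨k, rfl⟩ : ∃ k, n = k + 2 := ⟨n - 2, by omega⟩
  have hsum := hasSum_weighted_walkZ_split p q (fun _ => 1) A (by omega) hm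
  have hwsum := hasSum_weighted_walkZ_split p q (↑·) A (by omega) hm
  simp only [mul_one, one_mul] at hsum
  rw [← X_mul_derivative_mk, ← X_mul_derivative_mk] at hwsum
  have hℓ : (ℓ : ℝ) = m - k - 1 := by exact_mod_cast (by omega : ℓ = m - k - 1)
  have htree := X_mul_mk_pXA_toReal p A pN pY' pY'' hp hpsum h0A hApos hN hY'' hY'
  rw [hwsum.tsum_eq, hsum.tsum_eq, hm, walkZ_natCast_eq_coeff, hℓ]
  convert coeff_identity_of_tree_eq htree k m using 3 <;> push_cast <;> ring

theorem stmt16 (p : ℕ → ℝ) (A : Set ℕ)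
    (hp : ∀ k, 0 ≤ p k) (hpsum : ∑' k, p k = 1)
    (hp0 : 0 < p 0) (hp01 : p 0 + p 1 < 1)
    (h0A : 0 ∈ A) (hApos : 0 < ∑' k : ℕ, A.indicator p k)
    (pN pY' pY'' : PMF ℕ)
    (hN : ∀ n : ℕ, pN n = if 1 ≤ n then
        ENNReal.ofReal ((∑' k : ℕ, A.indicator p k)
          * (1 - ∑' k : ℕ, A.indicator p k) ^ (n - 1)) else 0)
    (hY'' : ∀ k : ℕ, pY'' k = if k ∈ A then
        ENNReal.ofReal (p k / ∑' j : ℕ, A.indicator p j) else 0)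
    (hY' : ∀ k : ℕ, pY' k = if (k + 1) ∈ A then 0 else
        ENNReal.ofReal (p (k + 1) / (1 - ∑' j : ℕ, A.indicator p j))) :
    -- `q = p^A` is the law of `X_A`, `S_n` the walk with steps of law `p^A`,
    -- and `n_j = n - 1_A(j)`.
    ∀ (ℓ : ℤ) (n : ℕ), 2 ≤ n →
      (∑' j : ℕ, p j
          * ((n : ℝ) / (n - if j ∈ A then 1 else 0)) * (j : ℝ)
          * walkZ (fun k => ((pXA pN pY' pY'') k).toReal)
              (n - if j ∈ A then 1 else 0)
              (((n - if j ∈ A then 1 else 0 : ℕ) : ℤ) + ℓ - j))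
        = (ℓ : ℝ) * (∑' j : ℕ, p j
              * ((n : ℝ) / (n - if j ∈ A then 1 else 0))
              * walkZ (fun k => ((pXA pN pY' pY'') k).toReal)
                  (n - if j ∈ A then 1 else 0)
                  (((n - if j ∈ A then 1 else 0 : ℕ) : ℤ) + ℓ - j))
          - ((ℓ : ℝ) - 1)
            * walkZ (fun k => ((pXA pN pY' pY'') k).toReal) n ((n : ℤ) + ℓ - 1) :=
  stmt16_general p A hp hpsum h0A hApos pN pY' pY'' hN hY'' hY'
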